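/- There exists a strictly increasing C² solution x: ℝ → ℝ of the equation x″ = x(x−1)(x−1/2) such that 0 < x(t) < 1 for all t ∈ ℝ, (x(t), x′(t)) → (0,0) as t → −∞ and (x(t), x′(t)) → (1,0) as t → +∞ (a heteroclinic orbit connecting the equilibria (0,0) and (1,0) of the system x′ = y, y′ = x(x−1)(x−1/2)). -/

import Mathlib

/-!
The standing front of the balanced Nagumo equation is a rescaled logistic curve.
If `x = σ(k t)` with `σ` the sigmoid, then `x' = k x (1 - x)` and hence
`x'' = k² x (1 - x) (1 - 2x)`, which is `x (x - 1) (x - 1/2)` exactly when `k² = 1/2`.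
Positivity, monotonicity and the limits at `±∞` are inherited from `σ`; the orbit lies
on the curve `y = k x (1 - x)` of the phase plane, which meets the axis at `(0,0)` and `(1,0)`.
-/

open Filter Set

noncomputable section

/-- `x` is a (C²) solution of the autonomous equation `x'' = x(x-1)(x-a)`,
with derivative `dx`. -/
def IsAutSol (a : ℝ) (x dx : ℝ → ℝ) : Prop :=
  (∀ t : ℝ, HasDerivAt x (dx t) t) ∧
  (∀ t : ℝ, HasDerivAt dx (x t * (x t - 1) * (x t - a)) t)

open Real Topology

namespace NagumoFront

def frontSlope (k x : ℝ) : ℝ := k * (x * (1 - x))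

lemma continuous_frontSlope (k : ℝ) : Continuous (frontSlope k) := by
  unfold frontSlope
  fun_prop

@[simp] lemma frontSlope_zero (k : ℝ) : frontSlope k 0 = 0 := by simp [frontSlope]

@[simp] lemma frontSlope_one (k : ℝ) : frontSlope k 1 = 0 := by simp [frontSlope]

lemma hasDerivAt_sigmoid_mul (k t : ℝ) :
    HasDerivAt (fun t => sigmoid (k * t)) (frontSlope k (sigmoid (k * t))) t :=
  ((hasDerivAt_sigmoid (k * t)).comp t ((hasDerivAt_id t).const_mul k)).congr_deriv <| by
    simp only [frontSlope]
    ring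

lemma hasDerivAt_frontSlope_sigmoid_mul (k t : ℝ) :
    HasDerivAt (fun t => frontSlope k (sigmoid (k * t)))
      (k ^ 2 * (sigmoid (k * t) * (1 - sigmoid (k * t)) * (1 - 2 * sigmoid (k * t)))) t := by
  have hx := hasDerivAt_sigmoid_mul k t
  refine ((hx.mul ((hasDerivAt_const t 1).sub hx)).const_mul k).congr_deriv ?_
  simp only [frontSlope, Pi.sub_apply]
  ring

lemma isAutSol_sigmoid_mul {k : ℝ} (hk : k ^ 2 = 1 / 2) :
    IsAutSol (1 / 2) (fun t => sigmoid (k * t)) (fun t => frontSlope k (sigmoid (k * t))) := by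
  refine ⟨hasDerivAt_sigmoid_mul k, fun t => ?_⟩
  refine (hasDerivAt_frontSlope_sigmoid_mul k t).congr_deriv ?_
  rw [hk]
  ring

lemma _root_.Filter.Tendsto.prodMk_frontSlope {α : Type*} {l : Filter α} {f : α → ℝ}
    {x₀ : ℝ} (k : ℝ) (h : Tendsto f l (𝓝 x₀)) :
    Tendsto (fun t => (f t, frontSlope k (f t))) l (𝓝 (x₀, frontSlope k x₀)) :=
  h.prodMk_nhds (((continuous_frontSlope k).tendsto x₀).comp h)

end NagumoFront

open NagumoFront in
theorem stmt_15 :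
    ∃ x dx : ℝ → ℝ, IsAutSol (1 / 2) x dx ∧
      StrictMono x ∧
      (∀ t : ℝ, 0 < x t ∧ x t < 1) ∧
      Tendsto (fun t => (x t, dx t)) atBot (nhds ((0:ℝ), (0:ℝ))) ∧
      Tendsto (fun t => (x t, dx t)) atTop (nhds ((1:ℝ), (0:ℝ))) := by
  obtain ⟨k, hk_pos, hk_sq⟩ : ∃ k : ℝ, 0 < k ∧ k ^ 2 = 1 / 2 :=
    ⟨√(1 / 2), by positivity, sq_sqrt (by norm_num)⟩
  have h_bot := (tendsto_sigmoid_atBot.comp (tendsto_id.const_mul_atBot hk_pos)).prodMk_frontSlope k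
  have h_top := (tendsto_sigmoid_atTop.comp (tendsto_id.const_mul_atTop hk_pos)).prodMk_frontSlope k
  rw [frontSlope_zero] at h_bot
  rw [frontSlope_one] at h_top
  exact ⟨_, _, isAutSol_sigmoid_mul hk_sq,
    sigmoid_strictMono.comp (strictMono_mul_left_of_pos hk_pos),
    fun t => ⟨sigmoid_pos _, sigmoid_lt_one _⟩, h_bot, h_top⟩
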